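/- arXiv:0709.2961 — 3 statements merged into one kernel-verified Lean document; each statement's English description precedes it below -/
import Mathlib

section
/- Let C be a set of difference constraints over a set X of integer variables and let G be its constraint graph. Then C is satisfiable in ℤ (i.e., there exists an assignment v : X → ℤ with v(x) − v(y) ≤ d for every constraint x − y ≤ d in C) if and only if G has no negative weight cycle. -/
/-!
A satisfying assignment telescopes along any path `u ⇝ w` to `v u - v w ≤ weight`, so on a
cycle it forces the weight to be nonnegative. Conversely, without negative cycles, cutting a
repeated edge out of a path removes a cycle and cannot increase its weight; hence every path
weighs at least as much as one with distinct edges, and so at least the sum of the negative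
edge weights of the finite graph. The negated minimal weight of a path ending at `x` is then
a satisfying assignment (the shortest-path potential from a virtual source).
-/

namespace UTVPIPaper

/-- `IsPath E u p v`: `p` is a path (a sequence of consecutive weighted edges,
each belonging to the edge set `E`) from vertex `u` to vertex `v`. -/
inductive IsPath {V : Type*} (E : Set (V × V × ℤ)) : V → List (V × V × ℤ) → V → Prop
  | nil (v : V) : IsPath E v [] v
  | cons {u v w : V} {d : ℤ} {p : List (V × V × ℤ)} :
      (u, v, d) ∈ E → IsPath E v p w → IsPath E u ((u, v, d) :: p) w

/-- The weight of a path: the sum of the weights of its edges. -/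
def pweight {V : Type*} (p : List (V × V × ℤ)) : ℤ := (p.map fun e => e.2.2).sum

/-- The graph `E` has no negative weight cycle. -/
def NoNegCycle {V : Type*} (E : Set (V × V × ℤ)) : Prop :=
  ∀ (v : V) (p : List (V × V × ℤ)), IsPath E v p v → 0 ≤ pweight p

/-- `wSP E u v` is the minimum weight of a path from `u` to `v` in `E`
(`⊤` if no path exists). -/
noncomputable def wSP {V : Type*} (E : Set (V × V × ℤ)) (u v : V) : WithTop ℤ :=
  sInf {w : WithTop ℤ | ∃ p, IsPath E u p v ∧ (pweight p : WithTop ℤ) = w}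

section Paths

variable {V : Type*} {E : Set (V × V × ℤ)}

@[simp]
lemma pweight_nil : pweight ([] : List (V × V × ℤ)) = 0 := rfl

@[simp]
lemma pweight_cons (e : V × V × ℤ) (p : List (V × V × ℤ)) :
    pweight (e :: p) = e.2.2 + pweight p := by
  simp [pweight]

@[simp]
lemma pweight_append (p q : List (V × V × ℤ)) :
    pweight (p ++ q) = pweight p + pweight q := by
  simp [pweight]

lemma IsPath.append {u v w : V} {p q : List (V × V × ℤ)}
    (hp : IsPath E u p v) (hq : IsPath E v q w) : IsPath E u (p ++ q) w := by
  induction hp with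
  | nil => exact hq
  | cons he _ ih => exact .cons he (ih hq)

lemma IsPath.of_append {u w : V} {p q : List (V × V × ℤ)}
    (h : IsPath E u (p ++ q) w) : ∃ m, IsPath E u p m ∧ IsPath E m q w := by
  induction p generalizing u with
  | nil => exact ⟨u, .nil u, h⟩
  | cons e p ih =>
    cases h with
    | cons he h' =>
      obtain ⟨m, hp, hq⟩ := ih h'
      exact ⟨m, .cons he hp, hq⟩

lemma IsPath.mem {u w : V} {p : List (V × V × ℤ)} (h : IsPath E u p w) {e : V × V × ℤ}
    (he : e ∈ p) : e ∈ E := by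
  induction h with
  | nil => simp at he
  | cons hmem _ ih =>
    rcases List.mem_cons.mp he with rfl | he
    · exact hmem
    · exact ih he

lemma IsPath.fst_eq {u w : V} {e : V × V × ℤ} {p : List (V × V × ℤ)}
    (h : IsPath E u (e :: p) w) : e.1 = u := by
  cases h
  rfl

lemma IsPath.sub_le_pweight {v : V → ℤ} (hv : ∀ e ∈ E, v e.1 - v e.2.1 ≤ e.2.2)
    {u w : V} {p : List (V × V × ℤ)} (h : IsPath E u p w) : v u - v w ≤ pweight p := by
  induction h with
  | nil => simp
  | cons he _ ih =>
    have := hv _ he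
    simp only [pweight_cons] at this ⊢
    linarith

lemma IsPath.cycle_and_shortcut {u w : V} {e : V × V × ℤ} {a b c : List (V × V × ℤ)}
    (h : IsPath E u (a ++ e :: (b ++ e :: c)) w) :
    IsPath E e.1 (e :: b) e.1 ∧ IsPath E u (a ++ e :: c) w := by
  obtain ⟨m, ha, hrest⟩ := h.of_append
  obtain ⟨m', hb, hc⟩ := (by simpa using hrest : IsPath E m ((e :: b) ++ e :: c) w).of_append
  obtain rfl := hrest.fst_eq
  obtain rfl := hc.fst_eq
  exact ⟨hb, ha.append hc⟩

end Paths

lemma _root_.List.exists_eq_append_cons_append_cons_of_not_nodup {α : Type*} {l : List α}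
    (h : ¬ l.Nodup) : ∃ (x : α) (a b c : List α), l = a ++ x :: (b ++ x :: c) := by
  obtain ⟨x, hx⟩ := List.exists_duplicate_iff_not_nodup.mpr h
  obtain ⟨r₁, r₂, rfl, h₁, h₂⟩ := List.cons_sublist_iff.mp (List.duplicate_iff_sublist.mp hx)
  obtain ⟨a, b, rfl⟩ := List.append_of_mem h₁
  obtain ⟨s, c, rfl⟩ := List.append_of_mem (List.singleton_sublist.mp h₂)
  exact ⟨x, a, b ++ s, c, by simp⟩

section NegativeCycles

variable {V : Type*} {E : Set (V × V × ℤ)}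

lemma not_exists_negative_cycle_iff :
    (¬ ∃ (u : V) (p : List (V × V × ℤ)), IsPath E u p u ∧ pweight p < 0) ↔ NoNegCycle E := by
  simp [NoNegCycle]

lemma noNegCycle_of_potential {v : V → ℤ} (hv : ∀ e ∈ E, v e.1 - v e.2.1 ≤ e.2.2) :
    NoNegCycle E := fun u _ hp => by
  simpa using hp.sub_le_pweight hv

lemma NoNegCycle.exists_nodup_pweight_le (hE : NoNegCycle E) {u w : V}
    {p : List (V × V × ℤ)} (hp : IsPath E u p w) :
    ∃ q, IsPath E u q w ∧ q.Nodup ∧ pweight q ≤ pweight p := by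
  induction hn : p.length using Nat.strong_induction_on generalizing p with
  | _ n ih =>
    by_cases hnd : p.Nodup
    · exact ⟨p, hp, hnd, le_rfl⟩
    obtain ⟨e, a, b, c, rfl⟩ := List.exists_eq_append_cons_append_cons_of_not_nodup hnd
    obtain ⟨hcycle, hshort⟩ := hp.cycle_and_shortcut
    obtain ⟨q, hq, hqnd, hqle⟩ := ih _ (by simp [← hn]) hshort rfl
    have hcycle_nonneg := hE _ _ hcycle
    refine ⟨q, hq, hqnd, ?_⟩
    simp only [pweight_append, pweight_cons] at hqle hcycle_nonneg ⊢
    linarith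

lemma IsPath.sum_min_le_pweight_of_nodup (hfin : E.Finite) {u w : V}
    {p : List (V × V × ℤ)} (hp : IsPath E u p w) (hnd : p.Nodup) :
    ∑ e ∈ hfin.toFinset, min e.2.2 0 ≤ pweight p := by
  classical
  have hsub : p.toFinset ⊆ hfin.toFinset := fun e he =>
    hfin.mem_toFinset.mpr (hp.mem (List.mem_toFinset.mp he))
  calc ∑ e ∈ hfin.toFinset, min e.2.2 0
      ≤ ∑ e ∈ p.toFinset, min e.2.2 0 :=
        Finset.sum_le_sum_of_subset_of_nonpos' hsub fun _ _ _ => min_le_right _ _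
    _ ≤ ∑ e ∈ p.toFinset, e.2.2 := Finset.sum_le_sum fun _ _ => min_le_left _ _
    _ = pweight p := List.sum_toFinset _ hnd

lemma NoNegCycle.sum_min_le_pweight (hE : NoNegCycle E) (hfin : E.Finite) {u w : V}
    {p : List (V × V × ℤ)} (hp : IsPath E u p w) :
    ∑ e ∈ hfin.toFinset, min e.2.2 0 ≤ pweight p := by
  obtain ⟨q, hq, hqnd, hqle⟩ := hE.exists_nodup_pweight_le hp
  exact (hq.sum_min_le_pweight_of_nodup hfin hqnd).trans hqle

lemma exists_potential_of_forall_le_pweight (B : ℤ)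
    (hB : ∀ u p w, IsPath E u p w → B ≤ pweight p) :
    ∃ v : V → ℤ, ∀ e ∈ E, v e.1 - v e.2.1 ≤ e.2.2 := by
  let weightsTo (x : V) : Set ℤ := {c | ∃ u p, IsPath E u p x ∧ pweight p = c}
  have hbdd (x : V) : BddBelow (weightsTo x) := by
    refine ⟨B, ?_⟩
    rintro _ ⟨u, p, hp, rfl⟩
    exact hB u p x hp
  refine ⟨fun x => -sInf (weightsTo x), ?_⟩
  rintro ⟨x, y, d⟩ he
  suffices sInf (weightsTo y) - d ≤ sInf (weightsTo x) by dsimp only; linarith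
  refine le_csInf ⟨0, x, [], .nil x, rfl⟩ ?_
  rintro _ ⟨u, p, hp, rfl⟩
  have hext : pweight p + d ∈ weightsTo y :=
    ⟨u, p ++ [(x, y, d)], hp.append (.cons he (.nil y)), by simp⟩
  linarith [csInf_le (hbdd y) hext]

end NegativeCycles

/-- A (finite) set `C` of difference constraints (the constraint
`(x, y, d)` means `x - y ≤ d`) is satisfiable in ℤ iff its constraint graph
(which has an edge `(x, y, d)` for each constraint `x - y ≤ d` in `C`)
has no negative weight cycle. -/
theorem diff_satisfiable_iff_no_negative_cycle {X : Type*}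
    (C : Set (X × X × ℤ)) (hfin : C.Finite) :
    (∃ v : X → ℤ, ∀ e ∈ C, v e.1 - v e.2.1 ≤ e.2.2) ↔
      ¬ ∃ (u : X) (p : List (X × X × ℤ)), IsPath C u p u ∧ pweight p < 0 := by
  rw [not_exists_negative_cycle_iff]
  exact ⟨fun ⟨_, hv⟩ => noNegCycle_of_potential hv, fun hC =>
    exists_potential_of_forall_le_pweight _ fun _ _ _ hp => hC.sum_min_le_pweight hfin hp⟩

end UTVPIPaper
end

section
/- Let φ be a set of UTVPI constraints. Then φ is unsatisfiable in ℤ if and only if the tightened transitive closure TTC(φ) contains a constraint of the form 0 ≤ d (i.e., with both coefficients zero) where d < 0. -/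
namespace UTVPIPaper

/-- A linear integer constraint `f ≤ bound`, where `f` is a finitely supported
integer linear form over the variables `X`. -/
structure UC (X : Type*) where
  f : X →₀ ℤ
  bound : ℤ

variable {X : Type*}

/-- `c` is a UTVPI constraint, i.e. of the form `a·x + b·y ≤ d` with `a, b ∈ {-1, 0, 1}`. -/
def UC.IsUTVPI (c : UC X) : Prop :=
  ∃ (a b : ℤ) (x y : X), (a = -1 ∨ a = 0 ∨ a = 1) ∧ (b = -1 ∨ b = 0 ∨ b = 1) ∧
    c.f = Finsupp.single x a + Finsupp.single y b

/-- The constraint `c` holds under the integer assignment `v`. -/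
def UC.holds (v : X → ℤ) (c : UC X) : Prop :=
  (c.f.sum fun x a => a * v x) ≤ c.bound

/-- The assignment `v` satisfies all constraints of `φ`. -/
def Sat (v : X → ℤ) (φ : Set (UC X)) : Prop := ∀ c ∈ φ, c.holds v

/-- `φ` is satisfiable in ℤ. -/
def SatZ (φ : Set (UC X)) : Prop := ∃ v : X → ℤ, Sat v φ

/-- The constraint `c` holds under the rational assignment `v`. -/
def UC.holdsQ (v : X → ℚ) (c : UC X) : Prop :=
  (c.f.sum fun x a => (a : ℚ) * v x) ≤ (c.bound : ℚ)

/-- `φ` is satisfiable in ℚ. -/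
def SatQ (φ : Set (UC X)) : Prop := ∃ v : X → ℚ, ∀ c ∈ φ, c.holdsQ v

/-- The transitive closure `TC(φ)`: the smallest set containing `φ` closed under
the rule: `a·x - c·y ≤ d₁` and `c·y + b·z ≤ d₂` imply `a·x + b·z ≤ d₁ + d₂`,
for `a, b ∈ {-1,0,1}` and `c ∈ {-1,1}`. -/
inductive TC (φ : Set (UC X)) : UC X → Prop
  | base {c : UC X} : c ∈ φ → TC φ c
  | trans {a b c : ℤ} {x y z : X} {d₁ d₂ : ℤ} :
      (a = -1 ∨ a = 0 ∨ a = 1) → (b = -1 ∨ b = 0 ∨ b = 1) → (c = -1 ∨ c = 1) →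
      TC φ ⟨Finsupp.single x a - Finsupp.single y c, d₁⟩ →
      TC φ ⟨Finsupp.single y c + Finsupp.single z b, d₂⟩ →
      TC φ ⟨Finsupp.single x a + Finsupp.single z b, d₁ + d₂⟩

/-- The tightened closure `TI(φ)`: the smallest set containing `φ` closed under
the rule: `a·x + a·x ≤ d` implies `a·x ≤ ⌊d/2⌋`, for `a ∈ {-1,1}`. -/
inductive TI (φ : Set (UC X)) : UC X → Prop
  | base {c : UC X} : c ∈ φ → TI φ c
  | tighten {a : ℤ} {x : X} {d : ℤ} :
      (a = -1 ∨ a = 1) →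
      TI φ ⟨Finsupp.single x a + Finsupp.single x a, d⟩ →
      TI φ ⟨Finsupp.single x a, Int.fdiv d 2⟩

/-- The tightened transitive closure `TTC(φ)`: the smallest set containing `φ`
closed under both the transitivity and the tightening rules. -/
inductive TTC (φ : Set (UC X)) : UC X → Prop
  | base {c : UC X} : c ∈ φ → TTC φ c
  | trans {a b c : ℤ} {x y z : X} {d₁ d₂ : ℤ} :
      (a = -1 ∨ a = 0 ∨ a = 1) → (b = -1 ∨ b = 0 ∨ b = 1) → (c = -1 ∨ c = 1) →
      TTC φ ⟨Finsupp.single x a - Finsupp.single y c, d₁⟩ →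
      TTC φ ⟨Finsupp.single y c + Finsupp.single z b, d₂⟩ →
      TTC φ ⟨Finsupp.single x a + Finsupp.single z b, d₁ + d₂⟩
  | tighten {a : ℤ} {x : X} {d : ℤ} :
      (a = -1 ∨ a = 1) →
      TTC φ ⟨Finsupp.single x a + Finsupp.single x a, d⟩ →
      TTC φ ⟨Finsupp.single x a, Int.fdiv d 2⟩

/-- Vertices of the constraint graph: `(true, x)` is `x⁺` and `(false, x)` is `x⁻`. -/
abbrev Vtx (X : Type*) := Bool × X

/-- The counterpart `-u` of a vertex `u`. -/
def vneg (u : Vtx X) : Vtx X := (!u.1, u.2)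

/-- The set of edges `E(c)` associated with a UTVPI constraint `c`
(the transformation table):
`x - y ≤ d` gives `(y⁺, x⁺, d)` and `(x⁻, y⁻, d)`;
`x + y ≤ d` gives `(y⁻, x⁺, d)` and `(x⁻, y⁺, d)`;
`-x - y ≤ d` gives `(y⁺, x⁻, d)` and `(x⁺, y⁻, d)`;
`x ≤ d` gives `(x⁻, x⁺, 2d)`; `-x ≤ d` gives `(x⁺, x⁻, 2d)`. -/
def cedges (c : UC X) : Set (Vtx X × Vtx X × ℤ) :=
  { e | ∃ (x y : X) (d : ℤ),
      (c = ⟨Finsupp.single x 1 - Finsupp.single y 1, d⟩ ∧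
        (e = ((true, y), (true, x), d) ∨ e = ((false, x), (false, y), d))) ∨
      (c = ⟨Finsupp.single x 1 + Finsupp.single y 1, d⟩ ∧
        (e = ((false, y), (true, x), d) ∨ e = ((false, x), (true, y), d))) ∨
      (c = ⟨-Finsupp.single x 1 - Finsupp.single y 1, d⟩ ∧
        (e = ((true, y), (false, x), d) ∨ e = ((true, x), (false, y), d))) ∨
      (c = ⟨Finsupp.single x 1, d⟩ ∧ e = ((false, x), (true, x), 2 * d)) ∨
      (c = ⟨-Finsupp.single x 1, d⟩ ∧ e = ((true, x), (false, x), 2 * d)) }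

/-- The constraint graph `G_φ` of a set `φ` of UTVPI constraints. -/
def Gr (φ : Set (UC X)) : Set (Vtx X × Vtx X × ℤ) := { e | ∃ c ∈ φ, e ∈ cedges c }

/-- The bounds function `ρ(u) = ⌊wSP(u, -u) / 2⌋` (`⊤` if there is no path from `u` to `-u`). -/
noncomputable def rho (φ : Set (UC X)) (u : Vtx X) : WithTop ℤ :=
  (wSP (Gr φ) u (vneg u)).map fun w => Int.fdiv w 2

/-!
Soundness: an integer solution of `φ` satisfies every constraint of `TTC(φ)`; tightening is sound
because `a·x` is an integer.

Completeness is Fourier–Motzkin elimination, one variable `x` at a time. Tightening first turns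
`x + x ≤ d` into `x ≤ ⌊d/2⌋`, so that `x` occurs with unit coefficients only; then the lower and
upper bounds on `x` are integers and the projection is exact over `ℤ`. The resolvent of
`x + b·z ≤ d₁` and `-x + b'·w ≤ d₂` is a transitivity step, so the eliminated system is again a
finite set of UTVPI constraints inside `TTC(φ)`. Once no variable is left, every constraint reads
`0 ≤ d`, and it holds unless `d < 0`.
-/

open Finsupp

theorem UC.holds_iff {v : X → ℤ} {c : UC X} :
    c.holds v ↔ linearCombination ℤ v c.f ≤ c.bound := Iff.rfl

theorem TTC.holds {φ : Set (UC X)} {v : X → ℤ} (hv : Sat v φ) {c : UC X} (h : TTC φ c) :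
    c.holds v := by
  induction h with
  | base hc => exact hv _ hc
  | trans _ _ _ _ _ ih₁ ih₂ =>
    simp only [UC.holds_iff, map_add, map_sub, linearCombination_single, smul_eq_mul] at ih₁ ih₂ ⊢
    linarith
  | tighten _ _ ih =>
    simp only [UC.holds_iff, map_add, linearCombination_single, smul_eq_mul] at ih ⊢
    rw [Int.fdiv_eq_ediv_of_nonneg _ zero_le_two]
    omega

theorem TTC.of_TTC {φ ψ : Set (UC X)} (h : ∀ c ∈ ψ, TTC φ c) {c : UC X} (hc : TTC ψ c) :
    TTC φ c := by
  induction hc with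
  | base hc => exact h _ hc
  | trans ha hb hc _ _ ih₁ ih₂ => exact .trans ha hb hc ih₁ ih₂
  | tighten ha _ ih => exact .tighten ha ih

theorem linearCombination_update {α R : Type*} [CommSemiring R] [DecidableEq α] (v : α → R)
    (x : α) (t : R) (f : α →₀ R) :
    linearCombination R (Function.update v x t) f =
      f x * t + linearCombination R v (f.erase x) := by
  conv_lhs => rw [← single_add_erase x f]
  rw [map_add, linearCombination_single, smul_eq_mul, Function.update_self]
  congr 1
  simp only [linearCombination_apply]
  refine Finsupp.sum_congr fun y hy => ?_
  rw [support_erase, Finset.mem_erase] at hy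
  rw [Function.update_of_ne hy.1]

theorem exists_between_of_finite {α : Type*} [LinearOrder α] [Nonempty α] {L U : Set α}
    (hL : L.Finite) (hU : U.Finite) (h : ∀ l ∈ L, ∀ u ∈ U, l ≤ u) :
    ∃ t, (∀ l ∈ L, l ≤ t) ∧ ∀ u ∈ U, t ≤ u := by
  rcases L.eq_empty_or_nonempty with rfl | hL₀
  · rcases U.eq_empty_or_nonempty with rfl | hU₀
    · exact ⟨Classical.ofNonempty, by simp, by simp⟩
    · obtain ⟨m, -, hmin⟩ := Set.exists_min_image U id hU hU₀
      exact ⟨m, by simp, hmin⟩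
  · obtain ⟨m, hm, hmax⟩ := Set.exists_max_image L id hL hL₀
    exact ⟨m, hmax, h m hm⟩

noncomputable def UC.add (c₁ c₂ : UC X) : UC X := ⟨c₁.f + c₂.f, c₁.bound + c₂.bound⟩

/-- Fourier–Motzkin elimination of `x`, for constraints whose coefficient of `x` is `-1`, `0`
or `1` (any other constraint is dropped). -/
noncomputable def elim (x : X) (ψ : Set (UC X)) : Set (UC X) :=
  {c ∈ ψ | c.f x = 0} ∪ Set.image2 UC.add {c ∈ ψ | c.f x = 1} {c ∈ ψ | c.f x = -1}

theorem elim_finite {ψ : Set (UC X)} (hψ : ψ.Finite) (x : X) : (elim x ψ).Finite :=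
  (hψ.sep _).union ((hψ.sep _).image2 _ (hψ.sep _))

theorem coeff_eq_zero_of_mem_elim {ψ : Set (UC X)} {x : X} {c : UC X} (hc : c ∈ elim x ψ) :
    c.f x = 0 := by
  rcases hc with ⟨-, h⟩ | ⟨c₁, ⟨-, e₁⟩, c₂, ⟨-, e₂⟩, rfl⟩
  · exact h
  · simp [UC.add, e₁, e₂]

/-- The step is exact over `ℤ`: with unit coefficients on `x`, all bounds on `x` are integers. -/
theorem exists_sat_update_of_sat_elim [DecidableEq X] {ψ : Set (UC X)} (hψ : ψ.Finite) {x : X}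
    (hcoeff : ∀ c ∈ ψ, c.f x = -1 ∨ c.f x = 0 ∨ c.f x = 1) {v : X → ℤ} (hv : Sat v (elim x ψ)) :
    ∃ t, Sat (Function.update v x t) ψ := by
  set r : UC X → ℤ := fun c => c.bound - linearCombination ℤ v (c.f.erase x)
  have hr : ∀ c, c.holds v ↔ c.f x * v x ≤ r c := fun c => by
    rw [UC.holds_iff, ← Function.update_eq_self x v, linearCombination_update,
      Function.update_eq_self]
    simp only [r]
    omega
  obtain ⟨t, ht_lower, ht_upper⟩ := exists_between_of_finite
    ((hψ.sep fun c => c.f x = -1).image fun c => -r c) ((hψ.sep fun c => c.f x = 1).image r)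
    (by
      rintro _ ⟨c₂, ⟨h₂, e₂⟩, rfl⟩ _ ⟨c₁, ⟨h₁, e₁⟩, rfl⟩
      have := (hr _).1 (hv _ (.inr ⟨c₁, ⟨h₁, e₁⟩, c₂, ⟨h₂, e₂⟩, rfl⟩))
      simp only [r, UC.add, Finsupp.add_apply, e₁, e₂, erase_add, map_add] at this ⊢
      omega)
  refine ⟨t, fun c hc => ?_⟩
  rw [UC.holds_iff, linearCombination_update]
  rcases hcoeff c hc with e | e | e
  · have := ht_lower _ ⟨c, ⟨hc, e⟩, rfl⟩
    simp only [r, e] at this ⊢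
    omega
  · have := (hr c).1 (hv c (.inl ⟨hc, e⟩))
    simp only [r, e] at this ⊢
    omega
  · have := ht_upper _ ⟨c, ⟨hc, e⟩, rfl⟩
    simp only [r, e] at this ⊢
    omega

theorem UC.IsUTVPI.exists_eq_single_add_single {c : UC X} (hc : c.IsUTVPI) {x : X} {a : ℤ}
    (ha : a = -1 ∨ a = 1) (h : c.f x = a) :
    ∃ z b, (b = -1 ∨ b = 0 ∨ b = 1) ∧ c.f = single x a + single z b := by
  classical
  obtain ⟨a', b', p, q, ha', hb', hf⟩ := hc
  rw [hf, Finsupp.add_apply, single_apply, single_apply] at h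
  rw [hf]
  by_cases hp : p = x <;> by_cases hq : q = x <;> simp only [hp, hq, if_true, if_false] at h
  · exact ⟨x, 0, by simp, by rw [hp, hq, ← single_add, ← single_add, ← h, add_zero]⟩
  · exact ⟨q, b', hb', by rw [hp, ← h, add_zero]⟩
  · exact ⟨p, a', ha', by rw [hq, ← h, zero_add, add_comm]⟩
  · omega

theorem UC.IsUTVPI.coeff_unit_or_eq_double {c : UC X} (hc : c.IsUTVPI) (x : X) :
    (c.f x = -1 ∨ c.f x = 0 ∨ c.f x = 1) ∨
      c.f = single x 1 + single x 1 ∨ c.f = single x (-1) + single x (-1) := by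
  classical
  obtain ⟨a, b, p, q, ha, hb, hf⟩ := hc
  rw [hf, Finsupp.add_apply, single_apply, single_apply]
  by_cases hp : p = x <;> by_cases hq : q = x <;> simp only [hp, hq, if_true, if_false]
  · rcases ha with rfl | rfl | rfl <;> rcases hb with rfl | rfl | rfl <;> simp
  all_goals omega

open Classical in
noncomputable def tightenAt (x : X) (c : UC X) : UC X :=
  if c.f = single x 1 + single x 1 then ⟨single x 1, c.bound.fdiv 2⟩
  else if c.f = single x (-1) + single x (-1) then ⟨single x (-1), c.bound.fdiv 2⟩
  else c

theorem TTC.tightenAt {φ : Set (UC X)} {c : UC X} (x : X) (h : TTC φ c) :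
    TTC φ (tightenAt x c) := by
  unfold UTVPIPaper.tightenAt
  split_ifs with h₁ h₂
  · exact .tighten (.inr rfl) (h₁ ▸ h)
  · exact .tighten (.inl rfl) (h₂ ▸ h)
  · exact h

theorem UC.holds.of_tightenAt {v : X → ℤ} {c : UC X} {x : X} (h : (tightenAt x c).holds v) :
    c.holds v := by
  unfold tightenAt at h
  rw [Int.fdiv_eq_ediv_of_nonneg _ zero_le_two] at h
  split_ifs at h with h₁ h₂
  · simp only [UC.holds_iff, h₁, map_add, linearCombination_single, smul_eq_mul] at h ⊢
    omega
  · simp only [UC.holds_iff, h₂, map_add, linearCombination_single, smul_eq_mul] at h ⊢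
    omega
  · exact h

theorem isUTVPI_tightenAt {c : UC X} (hc : c.IsUTVPI) (x : X) : (tightenAt x c).IsUTVPI := by
  unfold tightenAt
  split_ifs
  · exact ⟨1, 0, x, x, by simp, by simp, by simp⟩
  · exact ⟨-1, 0, x, x, by simp, by simp, by simp⟩
  · exact hc

theorem tightenAt_coeff_of_isUTVPI {c : UC X} (hc : c.IsUTVPI) (x : X) :
    (tightenAt x c).f x = -1 ∨ (tightenAt x c).f x = 0 ∨ (tightenAt x c).f x = 1 := by
  unfold tightenAt
  split_ifs with h₁ h₂
  · simp
  · simp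
  · exact (hc.coeff_unit_or_eq_double x).resolve_right (not_or.2 ⟨h₁, h₂⟩)

theorem tightenAt_coeff_eq_zero {c : UC X} {x y : X} (hyx : y ≠ x) (hy : c.f y = 0) :
    (tightenAt x c).f y = 0 := by
  unfold tightenAt
  split_ifs <;> simp [hyx.symm, hy]

theorem UC.IsUTVPI.add {c₁ c₂ : UC X} {x : X} (hc₁ : c₁.IsUTVPI) (hc₂ : c₂.IsUTVPI)
    (e₁ : c₁.f x = 1) (e₂ : c₂.f x = -1) : (c₁.add c₂).IsUTVPI := by
  obtain ⟨z, b, hb, hf₁⟩ := hc₁.exists_eq_single_add_single (.inr rfl) e₁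
  obtain ⟨w, b', hb', hf₂⟩ := hc₂.exists_eq_single_add_single (.inl rfl) e₂
  refine ⟨b', b, w, z, hb', hb, ?_⟩
  simp only [UC.add, hf₁, hf₂, single_neg]
  abel

theorem TTC.add {φ : Set (UC X)} {c₁ c₂ : UC X} {x : X} (hc₁ : c₁.IsUTVPI) (hc₂ : c₂.IsUTVPI)
    (e₁ : c₁.f x = 1) (e₂ : c₂.f x = -1) (h₁ : TTC φ c₁) (h₂ : TTC φ c₂) :
    TTC φ (c₁.add c₂) := by
  obtain ⟨z, b, hb, hf₁⟩ := hc₁.exists_eq_single_add_single (.inr rfl) e₁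
  obtain ⟨w, b', hb', hf₂⟩ := hc₂.exists_eq_single_add_single (.inl rfl) e₂
  cases c₁
  cases c₂
  dsimp only at hf₁ hf₂
  subst hf₁ hf₂
  rw [single_neg, neg_add_eq_sub] at h₂
  convert TTC.trans hb' hb (.inr rfl) h₂ h₁ using 2
  · simp only [UC.add, single_neg]
    abel
  · exact add_comm _ _

theorem isUTVPI_of_mem_elim {ψ : Set (UC X)} {x : X} (hψ : ∀ c ∈ ψ, c.IsUTVPI) :
    ∀ c ∈ elim x ψ, c.IsUTVPI := by
  rintro c (⟨hc, -⟩ | ⟨c₁, ⟨h₁, e₁⟩, c₂, ⟨h₂, e₂⟩, rfl⟩)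
  · exact hψ c hc
  · exact (hψ c₁ h₁).add (hψ c₂ h₂) e₁ e₂

theorem coeff_eq_zero_of_mem_elim_of_forall {ψ : Set (UC X)} {x y : X}
    (hψ : ∀ c ∈ ψ, c.f y = 0) : ∀ c ∈ elim x ψ, c.f y = 0 := by
  rintro c (⟨hc, -⟩ | ⟨c₁, ⟨h₁, -⟩, c₂, ⟨h₂, -⟩, rfl⟩)
  · exact hψ c hc
  · simp [UC.add, hψ c₁ h₁, hψ c₂ h₂]

theorem TTC_of_mem_elim {φ ψ : Set (UC X)} {x : X} (hψ : ∀ c ∈ ψ, c.IsUTVPI)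
    (hψφ : ∀ c ∈ ψ, TTC φ c) : ∀ c ∈ elim x ψ, TTC φ c := by
  rintro c (⟨hc, -⟩ | ⟨c₁, ⟨h₁, e₁⟩, c₂, ⟨h₂, e₂⟩, rfl⟩)
  · exact hψφ c hc
  · exact .add (hψ c₁ h₁) (hψ c₂ h₂) e₁ e₂ (hψφ c₁ h₁) (hψφ c₂ h₂)

theorem satZ_of_vars_subset (s : Finset X) {φ : Set (UC X)} (hfin : φ.Finite)
    (hwf : ∀ c ∈ φ, c.IsUTVPI) (hs : ∀ c ∈ φ, ∀ y ∉ s, c.f y = 0)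
    (hneg : ∀ d < 0, ¬ TTC φ ⟨0, d⟩) : SatZ φ := by
  classical
  induction s using Finset.induction_on generalizing φ with
  | empty =>
    refine ⟨0, fun c hc => ?_⟩
    have hf : c.f = 0 := Finsupp.ext fun y => hs c hc y (Finset.notMem_empty y)
    have hd : 0 ≤ c.bound := not_lt.1 fun hd => hneg _ hd (hf ▸ .base hc)
    simpa [UC.holds_iff, hf] using hd
  | insert x s _ ih =>
    set ψ := tightenAt x '' φ
    have hψfin : ψ.Finite := hfin.image _
    have hψwf : ∀ c ∈ ψ, c.IsUTVPI :=
      Set.forall_mem_image.2 fun c hc => isUTVPI_tightenAt (hwf c hc) x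
    have hψφ : ∀ c ∈ ψ, TTC φ c := Set.forall_mem_image.2 fun c hc => (TTC.base hc).tightenAt x
    have hψs : ∀ y ∉ insert x s, ∀ c ∈ ψ, c.f y = 0 := fun y hy =>
      Set.forall_mem_image.2 fun c hc =>
        tightenAt_coeff_eq_zero (fun h => hy (h ▸ Finset.mem_insert_self x s)) (hs c hc y hy)
    have hs' : ∀ c ∈ elim x ψ, ∀ y ∉ s, c.f y = 0 := fun c hc y hy => by
      by_cases hyx : y = x
      · exact hyx ▸ coeff_eq_zero_of_mem_elim hc
      · exact coeff_eq_zero_of_mem_elim_of_forall (hψs y (by simp [hyx, hy])) c hc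
    obtain ⟨v, hv⟩ := ih (elim_finite hψfin x) (isUTVPI_of_mem_elim hψwf) hs'
      (fun d hd h => hneg d hd (.of_TTC (TTC_of_mem_elim hψwf hψφ) h))
    obtain ⟨t, ht⟩ := exists_sat_update_of_sat_elim hψfin
      (Set.forall_mem_image.2 fun c hc => tightenAt_coeff_of_isUTVPI (hwf c hc) x) hv
    exact ⟨_, fun c hc => (ht _ (Set.mem_image_of_mem _ hc)).of_tightenAt⟩

theorem satZ_of_forall_not_TTC_neg {φ : Set (UC X)} (hfin : φ.Finite) (hwf : ∀ c ∈ φ, c.IsUTVPI)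
    (hneg : ∀ d < 0, ¬ TTC φ ⟨0, d⟩) : SatZ φ := by
  classical
  refine satZ_of_vars_subset (hfin.toFinset.biUnion fun c => c.f.support) hfin hwf
    (fun c hc y hy => ?_) hneg
  by_contra hy'
  exact hy (Finset.mem_biUnion.2 ⟨c, hfin.mem_toFinset.2 hc, Finsupp.mem_support_iff.2 hy'⟩)

/-- A (finite) set `φ` of UTVPI constraints is unsatisfiable in ℤ
iff `TTC(φ)` contains a constraint `0 ≤ d` (both coefficients zero) with `d < 0`. -/
theorem utvpi_unsat_iff_TTC_contains_negative {X : Type*}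
    (φ : Set (UC X)) (hwf : ∀ c ∈ φ, c.IsUTVPI) (hfin : φ.Finite) :
    ¬ SatZ φ ↔ ∃ d : ℤ, d < 0 ∧ TTC φ ⟨0, d⟩ := by
  refine ⟨fun hunsat => ?_, fun ⟨d, hd, h⟩ ⟨v, hv⟩ => ?_⟩
  · by_contra! hneg
    exact hunsat (satZ_of_forall_not_TTC_neg hfin hwf hneg)
  · exact hd.not_ge (by simpa [UC.holds_iff] using h.holds hv)

end UTVPIPaper
end

section
/- Let G = (V,E) be a weighted directed graph with integer weights, let π be a valid potential function for G, and let E′ = { (u,v) | (u,v,d) ∈ E, π(u) + d = π(v) } be the set of tight edges. Then two vertices u and v are mutually reachable in the unweighted directed graph (V,E′) (i.e., lie in the same strongly connected component) if and only if there is a zero-weight cycle in G containing both u and v. -/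
/-!
For a valid potential the reduced costs `π u + d - π v` are nonnegative and telescope along a
path, so a cycle has weight zero exactly when all of its edges are tight: the zero-weight cycles
of `G` are the cycles of the tight subgraph `(V, E′)`. In any directed graph two vertices are
mutually reachable iff some cycle passes through both.
-/

namespace UTVPIPaper

/-- `π` is a valid potential function for the graph `E`:
`π(u) + d - π(v) ≥ 0` for every edge `(u, v, d)`. -/
def ValidPotential {V : Type*} (E : Set (V × V × ℤ)) (π : V → ℤ) : Prop :=
  ∀ e ∈ E, 0 ≤ π e.1 + e.2.2 - π e.2.1

section

variable {V : Type*} {E : Set (V × V × ℤ)} {π : V → ℤ} {u v x : V} {p : List (V × V × ℤ)}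

/-- The set `E′` of the paper, with the weights kept. -/
def tightEdges (E : Set (V × V × ℤ)) (π : V → ℤ) : Set (V × V × ℤ) :=
  {e ∈ E | π e.1 + e.2.2 = π e.2.1}

def Adj (E : Set (V × V × ℤ)) (a b : V) : Prop :=
  ∃ d : ℤ, (a, b, d) ∈ E

def reducedCost (π : V → ℤ) (e : V × V × ℤ) : ℤ :=
  π e.1 + e.2.2 - π e.2.1

namespace IsPath

lemma append_s15 {w : V} {q : List (V × V × ℤ)} (hp : IsPath E u p v) (hq : IsPath E v q w) :
    IsPath E u (p ++ q) w := by
  induction hp with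
  | nil => exact hq
  | cons he _ ih => exact cons he (ih hq)

lemma mem_of_mem (hp : IsPath E u p v) {e : V × V × ℤ} (he : e ∈ p) : e ∈ E := by
  induction hp with
  | nil => simp at he
  | cons hedge _ ih =>
    rcases List.mem_cons.1 he with rfl | he
    · exact hedge
    · exact ih he

lemma fst_mem_map_fst (hp : IsPath E u p v) (hne : p ≠ []) : u ∈ p.map (·.1) := by
  cases hp with
  | nil => exact absurd rfl hne
  | cons => simp

lemma reflTransGen_adj (hp : IsPath E u p v) : Relation.ReflTransGen (Adj E) u v := by
  induction hp with
  | nil => exact .refl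
  | cons he _ ih => exact .head ⟨_, he⟩ ih

lemma reachable_of_mem_map_fst (hp : IsPath E u p v) (hx : x ∈ p.map (·.1)) :
    Relation.ReflTransGen (Adj E) u x ∧ Relation.TransGen (Adj E) x v := by
  induction hp with
  | nil => simp at hx
  | cons he hp ih =>
    rcases List.mem_cons.1 hx with rfl | hx
    · exact ⟨.refl, .head' ⟨_, he⟩ hp.reflTransGen_adj⟩
    · obtain ⟨hux, hxv⟩ := ih hx
      exact ⟨.head ⟨_, he⟩ hux, hxv⟩

lemma sum_reducedCost (hp : IsPath E u p v) :
    (p.map (reducedCost π)).sum = π u + pweight p - π v := by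
  induction hp with
  | nil => simp [pweight]
  | cons _ _ ih =>
    simp only [pweight, reducedCost, List.map_cons, List.sum_cons] at ih ⊢
    omega

end IsPath

lemma exists_isPath_of_transGen_adj (h : Relation.TransGen (Adj E) u v) :
    ∃ p, IsPath E u p v ∧ p ≠ [] := by
  induction h using Relation.TransGen.head_induction_on with
  | single h =>
    obtain ⟨d, hd⟩ := h
    exact ⟨_, .cons hd (.nil _), List.cons_ne_nil _ _⟩
  | head h _ ih =>
    obtain ⟨d, hd⟩ := h
    obtain ⟨p, hp, -⟩ := ih
    exact ⟨_, .cons hd hp, List.cons_ne_nil _ _⟩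

theorem transGen_adj_and_transGen_adj_iff_exists_cycle :
    (Relation.TransGen (Adj E) u v ∧ Relation.TransGen (Adj E) v u) ↔
    ∃ (a : V) (p : List (V × V × ℤ)),
      IsPath E a p a ∧ p ≠ [] ∧ u ∈ p.map (·.1) ∧ v ∈ p.map (·.1) := by
  constructor
  · rintro ⟨huv, hvu⟩
    obtain ⟨p, hp, hpne⟩ := exists_isPath_of_transGen_adj huv
    obtain ⟨q, hq, hqne⟩ := exists_isPath_of_transGen_adj hvu
    refine ⟨u, p ++ q, hp.append_s15 hq, by simp [hpne], ?_, ?_⟩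
    · simpa using Or.inl (hp.fst_mem_map_fst hpne)
    · simpa using Or.inr (hq.fst_mem_map_fst hqne)
  · rintro ⟨a, p, hp, -, hu, hv⟩
    obtain ⟨hau, hua⟩ := hp.reachable_of_mem_map_fst hu
    obtain ⟨hav, hva⟩ := hp.reachable_of_mem_map_fst hv
    exact ⟨hua.trans_left hav, hva.trans_left hau⟩

lemma isPath_sep_iff {P : V × V × ℤ → Prop} :
    IsPath {e ∈ E | P e} u p v ↔ IsPath E u p v ∧ ∀ e ∈ p, P e := by
  constructor
  · intro hp
    induction hp with
    | nil => exact ⟨.nil _, by simp⟩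
    | cons he _ ih => exact ⟨.cons he.1 ih.1, List.forall_mem_cons.2 ⟨he.2, ih.2⟩⟩
  · rintro ⟨hp, hP⟩
    induction hp with
    | nil => exact .nil _
    | cons he _ ih =>
      rw [List.forall_mem_cons] at hP
      exact .cons ⟨he, hP.1⟩ (ih hP.2)

lemma ValidPotential.pweight_eq_sub_iff (hπ : ValidPotential E π) (hp : IsPath E u p v) :
    pweight p = π v - π u ↔ ∀ e ∈ p, π e.1 + e.2.2 = π e.2.1 := by
  have hsum := hp.sum_reducedCost (π := π)
  have hnonneg : ∀ c ∈ p.map (reducedCost π), 0 ≤ c :=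
    List.forall_mem_map.2 fun e he => hπ e (hp.mem_of_mem he)
  constructor
  · intro hw e he
    have := List.all_zero_of_le_zero_le_of_sum_eq_zero hnonneg (by omega)
      (List.mem_map_of_mem (f := reducedCost π) he)
    rw [reducedCost] at this
    omega
  · intro ht
    have hzero : (p.map (reducedCost π)).sum = 0 :=
      List.sum_eq_zero (List.forall_mem_map.2 fun e he => sub_eq_zero.2 (ht e he))
    omega

lemma ValidPotential.isPath_tightEdges_iff (hπ : ValidPotential E π) :
    IsPath (tightEdges E π) u p u ↔ IsPath E u p u ∧ pweight p = 0 := by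
  rw [tightEdges, isPath_sep_iff]
  exact and_congr_right fun hp => (sub_self (π u) ▸ hπ.pweight_eq_sub_iff hp).symm

end

/-- Let `π` be a valid potential function for `G = (V, E)` and let
`E'` be the set of tight edges `(u, v)` (those with `π(u) + d = π(v)` for some
`(u, v, d) ∈ E`). Then `u` and `v` are mutually reachable in `(V, E')` (i.e. lie in
the same strongly connected component) iff there is a zero-weight cycle in `G`
containing both `u` and `v`. -/
theorem same_SCC_of_tight_iff_zero_cycle {V : Type*}
    (E : Set (V × V × ℤ)) (π : V → ℤ) (hπ : ValidPotential E π) (u v : V) :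
    (Relation.TransGen (fun a b : V => ∃ d : ℤ, (a, b, d) ∈ E ∧ π a + d = π b) u v ∧
     Relation.TransGen (fun a b : V => ∃ d : ℤ, (a, b, d) ∈ E ∧ π a + d = π b) v u) ↔
    ∃ (a : V) (p : List (V × V × ℤ)),
      IsPath E a p a ∧ p ≠ [] ∧ pweight p = 0 ∧
      u ∈ p.map (fun e => e.1) ∧ v ∈ p.map (fun e => e.1) := by
  refine (transGen_adj_and_transGen_adj_iff_exists_cycle (E := tightEdges E π)).trans ?_
  refine exists_congr fun a => exists_congr fun p => ?_
  rw [hπ.isPath_tightEdges_iff, and_assoc]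
  exact and_congr_right fun _ => and_left_comm

end UTVPIPaper
end
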